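/- arXiv:1507.08368 — 2 statements merged into one kernel-verified Lean document; each statement's English description precedes it below -/
import Mathlib

section
/- Let m, n : ℝ → ℝ be nonnegative, measurable and Lebesgue integrable, with H₁ = ∫_ℝ m and H₂ = ∫_ℝ n. Define u = p∗m, u_x, v = p∗n, v_x as the kernel integrals, and set M(x) = (u(x)+u_x(x))n(x) + (v_x(x)−v(x))m(x). Then for every x ∈ ℝ: −n(x)·(∂_xp∗((u+u_x)M))(x) + m(x)·(∂_xp∗((v_x−v)M))(x) ≤ 2H₁H₂(H₁+H₂)(m(x)+n(x)), where (∂_xp∗f)(x) = −(1/2)∫_ℝ sgn(x−y) e^{−|x−y|} f(y) dy. -/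
open MeasureTheory

/-- `u = p ∗ m`, where `p(x) = (1/2) e^{-|x|}`. -/
noncomputable def pConv (m : ℝ → ℝ) (x : ℝ) : ℝ :=
  (1 / 2) * ∫ y : ℝ, Real.exp (-|x - y|) * m y

/-- `u_x = (∂ₓ p) ∗ m`, where `p(x) = (1/2) e^{-|x|}`. -/
noncomputable def pxConv (m : ℝ → ℝ) (x : ℝ) : ℝ :=
  -(1 / 2) * ∫ y : ℝ, Real.sign (x - y) * Real.exp (-|x - y|) * m y

lemma abs_sign_le_one (t : ℝ) : |Real.sign t| ≤ 1 := by
  rcases Real.sign_apply_eq t with h | h | h <;> rw [h] <;> norm_num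

lemma kernel_abs_le (x y : ℝ) (f : ℝ → ℝ) (g : ℝ → ℝ) (hfg : ∀ y, |f y| ≤ g y) :
    |Real.sign (x - y) * Real.exp (-|x - y|) * f y| ≤ g y := by
  rw [abs_mul, abs_mul]
  calc |Real.sign (x - y)| * |Real.exp (-|x - y|)| * |f y|
      ≤ 1 * 1 * |f y| := by
        apply mul_le_mul (mul_le_mul (abs_sign_le_one _) ?_ (abs_nonneg _) zero_le_one)
          le_rfl (abs_nonneg _) (by norm_num)
        rw [abs_of_nonneg (Real.exp_nonneg _)]
        exact Real.exp_le_one_iff.mpr (by simp [abs_nonneg])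
    _ = |f y| := by ring
    _ ≤ g y := hfg y

lemma abs_pxConv_le (f g : ℝ → ℝ) (hg : Integrable g) (hfg : ∀ y, |f y| ≤ g y) (x : ℝ) :
    |pxConv f x| ≤ (1 / 2) * ∫ y : ℝ, g y := by
  unfold pxConv
  rw [abs_mul, abs_neg, abs_of_nonneg (by norm_num : (0:ℝ) ≤ 1/2)]
  apply mul_le_mul_of_nonneg_left _ (by norm_num)
  calc |∫ y : ℝ, Real.sign (x - y) * Real.exp (-|x - y|) * f y|
      ≤ ∫ y : ℝ, |Real.sign (x - y) * Real.exp (-|x - y|) * f y| := by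
        simp only [← Real.norm_eq_abs]
        exact norm_integral_le_integral_norm _
    _ ≤ ∫ y : ℝ, g y := by
        apply integral_mono_of_nonneg (Filter.Eventually.of_forall fun y => abs_nonneg _) hg
        exact Filter.Eventually.of_forall fun y => kernel_abs_le x y f g hfg

lemma abs_pConv_le (f g : ℝ → ℝ) (hg : Integrable g) (hfg : ∀ y, |f y| ≤ g y) (x : ℝ) :
    |pConv f x| ≤ (1 / 2) * ∫ y : ℝ, g y := by
  unfold pConv
  rw [abs_mul, abs_of_nonneg (by norm_num : (0:ℝ) ≤ 1/2)]
  apply mul_le_mul_of_nonneg_left _ (by norm_num)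
  calc |∫ y : ℝ, Real.exp (-|x - y|) * f y|
      ≤ ∫ y : ℝ, |Real.exp (-|x - y|) * f y| := by
        simp only [← Real.norm_eq_abs]
        exact norm_integral_le_integral_norm _
    _ ≤ ∫ y : ℝ, g y := by
        apply integral_mono_of_nonneg (Filter.Eventually.of_forall fun y => abs_nonneg _) hg
        refine Filter.Eventually.of_forall fun y => ?_
        show |Real.exp (-|x - y|) * f y| ≤ g y
        rw [abs_mul, abs_of_nonneg (Real.exp_nonneg _)]
        calc Real.exp (-|x - y|) * |f y| ≤ 1 * |f y| := by
              apply mul_le_mul_of_nonneg_right _ (abs_nonneg _)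
              exact Real.exp_le_one_iff.mpr (by simp [abs_nonneg])
          _ = |f y| := one_mul _
          _ ≤ g y := hfg y

/-- For nonnegative, measurable, integrable `m, n` with `H₁ = ∫ m`, `H₂ = ∫ n`,
`u = p ∗ m`, `v = p ∗ n` and `M = (u + u_x) n + (v_x - v) m`, one has
`-n ⬝ (∂ₓp ∗ ((u+u_x)M)) + m ⬝ (∂ₓp ∗ ((v_x-v)M)) ≤ 2H₁H₂(H₁+H₂)(m+n)`. -/
theorem nonlocal_term_bound_deriv_conv (m n : ℝ → ℝ) (H₁ H₂ : ℝ) (M : ℝ → ℝ)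
    (hm : Measurable m) (hn : Measurable n)
    (hmnonneg : ∀ x : ℝ, 0 ≤ m x) (hnnonneg : ∀ x : ℝ, 0 ≤ n x)
    (hmint : Integrable m) (hnint : Integrable n)
    (hH₁ : H₁ = ∫ x : ℝ, m x) (hH₂ : H₂ = ∫ x : ℝ, n x)
    (hM : M = fun x => (pConv m x + pxConv m x) * n x
        + (pxConv n x - pConv n x) * m x)
    (x : ℝ) :
    -(n x) * pxConv (fun y => (pConv m y + pxConv m y) * M y) x
      + (m x) * pxConv (fun y => (pxConv n y - pConv n y) * M y) x
      ≤ 2 * H₁ * H₂ * (H₁ + H₂) * (m x + n x) := by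
  have hH₁0 : 0 ≤ H₁ := by rw [hH₁]; exact integral_nonneg hmnonneg
  have hH₂0 : 0 ≤ H₂ := by rw [hH₂]; exact integral_nonneg hnnonneg
  -- bounds |u + u_x| ≤ H₁ and |v_x - v| ≤ H₂
  have habs_m : ∀ y : ℝ, |m y| ≤ m y := fun y => le_of_eq (abs_of_nonneg (hmnonneg y))
  have habs_n : ∀ y : ℝ, |n y| ≤ n y := fun y => le_of_eq (abs_of_nonneg (hnnonneg y))
  have hu : ∀ y : ℝ, |pConv m y + pxConv m y| ≤ H₁ := by
    intro y
    calc |pConv m y + pxConv m y| ≤ |pConv m y| + |pxConv m y| := abs_add_le _ _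
      _ ≤ (1/2) * (∫ z : ℝ, m z) + (1/2) * (∫ z : ℝ, m z) :=
        add_le_add (abs_pConv_le m m hmint habs_m y) (abs_pxConv_le m m hmint habs_m y)
      _ = H₁ := by rw [hH₁]; ring
  have hv : ∀ y : ℝ, |pxConv n y - pConv n y| ≤ H₂ := by
    intro y
    calc |pxConv n y - pConv n y| ≤ |pxConv n y| + |pConv n y| := abs_sub _ _
      _ ≤ (1/2) * (∫ z : ℝ, n z) + (1/2) * (∫ z : ℝ, n z) :=
        add_le_add (abs_pxConv_le n n hnint habs_n y) (abs_pConv_le n n hnint habs_n y)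
      _ = H₂ := by rw [hH₂]; ring
  -- bound |M|
  have hMabs : ∀ y : ℝ, |M y| ≤ H₁ * n y + H₂ * m y := by
    intro y
    rw [hM]
    calc |(pConv m y + pxConv m y) * n y + (pxConv n y - pConv n y) * m y|
        ≤ |(pConv m y + pxConv m y) * n y| + |(pxConv n y - pConv n y) * m y| := abs_add_le _ _
      _ = |pConv m y + pxConv m y| * |n y| + |pxConv n y - pConv n y| * |m y| := by
          rw [abs_mul, abs_mul]
      _ ≤ H₁ * n y + H₂ * m y := by
          apply add_le_add
          · exact mul_le_mul (hu y) (le_of_eq (abs_of_nonneg (hnnonneg y))) (abs_nonneg _) hH₁0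
          · exact mul_le_mul (hv y) (le_of_eq (abs_of_nonneg (hmnonneg y))) (abs_nonneg _) hH₂0
  have hBint : Integrable (fun y : ℝ => H₁ * n y + H₂ * m y) :=
    (hnint.const_mul H₁).add (hmint.const_mul H₂)
  have hBval : (∫ y : ℝ, (H₁ * n y + H₂ * m y)) = 2 * H₁ * H₂ := by
    rw [integral_add (hnint.const_mul H₁) (hmint.const_mul H₂),
      integral_const_mul, integral_const_mul, ← hH₁, ← hH₂]
    ring
  -- bound the two nonlocal terms
  have h1 : |pxConv (fun y => (pConv m y + pxConv m y) * M y) x| ≤ H₁ * (H₁ * H₂) := by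
    have := abs_pxConv_le (fun y => (pConv m y + pxConv m y) * M y)
      (fun y => H₁ * (H₁ * n y + H₂ * m y)) (hBint.const_mul H₁) (fun y => by
        rw [abs_mul]
        exact mul_le_mul (hu y) (hMabs y) (abs_nonneg _) hH₁0) x
    calc |pxConv (fun y => (pConv m y + pxConv m y) * M y) x|
        ≤ (1/2) * ∫ y : ℝ, H₁ * (H₁ * n y + H₂ * m y) := this
      _ = H₁ * (H₁ * H₂) := by rw [integral_const_mul, hBval]; ring
  have h2 : |pxConv (fun y => (pxConv n y - pConv n y) * M y) x| ≤ H₂ * (H₁ * H₂) := by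
    have := abs_pxConv_le (fun y => (pxConv n y - pConv n y) * M y)
      (fun y => H₂ * (H₁ * n y + H₂ * m y)) (hBint.const_mul H₂) (fun y => by
        rw [abs_mul]
        exact mul_le_mul (hv y) (hMabs y) (abs_nonneg _) hH₂0) x
    calc |pxConv (fun y => (pxConv n y - pConv n y) * M y) x|
        ≤ (1/2) * ∫ y : ℝ, H₂ * (H₁ * n y + H₂ * m y) := this
      _ = H₂ * (H₁ * H₂) := by rw [integral_const_mul, hBval]; ring
  have e1 : -(n x) * pxConv (fun y => (pConv m y + pxConv m y) * M y) x
      ≤ n x * (H₁ * (H₁ * H₂)) := by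
    have := (abs_le.mp h1).1
    nlinarith [hnnonneg x]
  have e2 : (m x) * pxConv (fun y => (pxConv n y - pConv n y) * M y) x
      ≤ m x * (H₂ * (H₁ * H₂)) := by
    have := (abs_le.mp h2).2
    nlinarith [hmnonneg x]
  nlinarith [hmnonneg x, hnnonneg x, mul_nonneg hH₁0 hH₂0,
    mul_nonneg (mul_nonneg hH₁0 hH₂0) hH₁0, mul_nonneg (mul_nonneg hH₁0 hH₂0) hH₂0]
end

section
/- Let δ > 0, and let M, N : [0,T₁) → ℝ be differentiable with N(t) > 0, M'(t) ≤ −M(t)² + δN(t), and N'(t) = −M(t)N(t) for all t ∈ [0,T₁), where M(0) < −√(2δN(0)), T₁ = −(M(0)+√(M(0)²−2δN(0)))/(δN(0)) and T₂ = −(M(0)−√(M(0)²−2δN(0)))/(δN(0)). Then for every t ∈ [0,T₁): (T₁−t)M(t) ≤ −2(t−(T₁+T₂)/2)/(t−T₂); consequently liminf_{t→T₁⁻} (T₁−t)M(t) ≤ −1. -/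
/-!
With `W = M / N` and `u = 1 / N` the system gives `W' ≤ δ` and `u' = W`, so from any base point `b`
the function `u` stays below its quadratic majorant `u b + W b (t - b) + δ (t - b)² / 2`.
From `b = 0` this majorant is `δ (t - T₁) (t - T₂) / 2`, which bounds `N` from below and, together
with `W t ≤ δ (t - (T₁ + T₂) / 2)`, gives the upper estimate. Since `u > 0` up to `T₁`, the majorant
from base `t` is nonnegative at `T₁`, and `u` decreases at rate at least `δ (T₂ - T₁) / 2`; together
these bound `(T₁ - t) M t` from below, which is needed for the `liminf` in `ℝ` to be meaningful.
-/

open Set Filter Topology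

theorem sub_le_sub_of_hasDerivAt_le {f g f' g' : ℝ → ℝ} {a b : ℝ}
    (hf : ∀ x ∈ Ico a b, HasDerivAt f (f' x) x) (hg : ∀ x ∈ Ico a b, HasDerivAt g (g' x) x)
    (hle : ∀ x ∈ Ico a b, f' x ≤ g' x) {x : ℝ} (hx : x ∈ Ico a b) :
    f x - f a ≤ g x - g a := by
  have hderiv : ∀ y ∈ Ico a b, HasDerivAt (g - f) (g' y - f' y) y :=
    fun y hy => (hg y hy).sub (hf y hy)
  have hmono : MonotoneOn (g - f) (Ico a b) := by
    refine monotoneOn_of_hasDerivWithinAt_nonneg (f' := g' - f') (convex_Ico a b)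
      (fun y hy => (hderiv y hy).continuousAt.continuousWithinAt) (fun y hy => ?_) (fun y hy => ?_)
    · exact (hderiv y (interior_subset hy)).hasDerivWithinAt
    · exact sub_nonneg.2 (hle y (interior_subset hy))
  have := hmono (left_mem_Ico.2 (hx.1.trans_lt hx.2)) hx hx.1
  simp only [Pi.sub_apply] at this
  linarith

theorem le_of_forall_Ico_le {f : ℝ → ℝ} {a T c : ℝ} (haT : a < T)
    (hf : ContinuousWithinAt f (Iio T) T) (h : ∀ x ∈ Ico a T, f x ≤ c) : f T ≤ c :=
  le_of_tendsto hf (eventually_of_mem (Ico_mem_nhdsLT haT) h)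

theorem liminf_le_of_eventually_le_of_tendsto {α : Type*} {l : Filter α} [l.NeBot]
    {f g : α → ℝ} {L : ℝ} (hbdd : IsBoundedUnder (· ≥ ·) l f) (hfg : f ≤ᶠ[l] g)
    (hg : Tendsto g l (𝓝 L)) : liminf f l ≤ L :=
  hg.liminf_eq ▸ liminf_le_liminf hfg hbdd hg.isBoundedUnder_le.isCoboundedUnder_ge

structure RiccatiSystem (δ a T : ℝ) (M N M' : ℝ → ℝ) : Prop where
  pos : ∀ t ∈ Ico a T, 0 < N t
  hasDerivAt_M : ∀ t ∈ Ico a T, HasDerivAt M (M' t) t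
  deriv_le : ∀ t ∈ Ico a T, M' t ≤ -M t ^ 2 + δ * N t
  hasDerivAt_N : ∀ t ∈ Ico a T, HasDerivAt N (-(M t * N t)) t

namespace RiccatiSystem

variable {δ a b T : ℝ} {M N M' : ℝ → ℝ}

theorem mono (h : RiccatiSystem δ a T M N M') (hab : a ≤ b) : RiccatiSystem δ b T M N M' where
  pos t ht := h.pos t (Ico_subset_Ico_left hab ht)
  hasDerivAt_M t ht := h.hasDerivAt_M t (Ico_subset_Ico_left hab ht)
  deriv_le t ht := h.deriv_le t (Ico_subset_Ico_left hab ht)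
  hasDerivAt_N t ht := h.hasDerivAt_N t (Ico_subset_Ico_left hab ht)

theorem hasDerivAt_inv (h : RiccatiSystem δ a T M N M') {t : ℝ} (ht : t ∈ Ico a T) :
    HasDerivAt N⁻¹ (M t / N t) t := by
  have hN := (h.pos t ht).ne'
  refine ((h.hasDerivAt_N t ht).inv hN).congr_deriv ?_
  field_simp

theorem div_sub_div_le (h : RiccatiSystem δ a T M N M') {t : ℝ} (ht : t ∈ Ico a T) :
    M t / N t - M a / N a ≤ δ * (t - a) := by
  have hW : ∀ x ∈ Ico a T, HasDerivAt (M / N) ((M' x + M x ^ 2) / N x) x := fun x hx => by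
    have hN := (h.pos x hx).ne'
    refine ((h.hasDerivAt_M x hx).div (h.hasDerivAt_N x hx) hN).congr_deriv ?_
    field_simp
    ring
  have hle : ∀ x ∈ Ico a T, (M' x + M x ^ 2) / N x ≤ δ := fun x hx => by
    rw [div_le_iff₀ (h.pos x hx)]
    nlinarith [h.deriv_le x hx, h.pos x hx]
  have := sub_le_sub_of_hasDerivAt_le hW (fun x _ => hasDerivAt_mul_const δ) hle ht
  simp only [Pi.div_apply] at this
  linarith

theorem inv_le_quadratic (h : RiccatiSystem δ a T M N M') {t : ℝ} (ht : t ∈ Ico a T) :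
    (N t)⁻¹ ≤ (N a)⁻¹ + M a / N a * (t - a) + δ / 2 * (t - a) ^ 2 := by
  have hq : ∀ x ∈ Ico a T, HasDerivAt (fun y => M a / N a * (y - a) + δ / 2 * (y - a) ^ 2)
      (M a / N a + δ * (x - a)) x := fun x _ => by
    refine ((((hasDerivAt_id x).sub_const a).const_mul (M a / N a)).add
      ((((hasDerivAt_id x).sub_const a).pow 2).const_mul (δ / 2))).congr_deriv ?_
    simp only [id, Nat.cast_ofNat]
    ring
  have := sub_le_sub_of_hasDerivAt_le (fun x hx => h.hasDerivAt_inv hx) hq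
    (fun x hx => by linarith [h.div_sub_div_le hx]) ht
  simp only [Pi.inv_apply, sub_self, mul_zero, add_zero, ne_eq, OfNat.ofNat_ne_zero,
    not_false_eq_true, zero_pow] at this
  linarith

theorem quadratic_nonneg (h : RiccatiSystem δ a T M N M') (haT : a < T) :
    0 ≤ (N a)⁻¹ + M a / N a * (T - a) + δ / 2 * (T - a) ^ 2 := by
  refine neg_nonpos.1 (le_of_forall_Ico_le (f := fun x => -((N a)⁻¹ + M a / N a * (x - a) +
    δ / 2 * (x - a) ^ 2)) haT (by fun_prop) fun x hx => ?_)
  linarith [h.inv_le_quadratic hx, inv_pos.2 (h.pos x hx)]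

theorem mul_sub_le_inv (h : RiccatiSystem δ a T M N M') (haT : a < T) {κ : ℝ}
    (hW : ∀ x ∈ Ico a T, M x / N x ≤ -κ) : κ * (T - a) ≤ (N a)⁻¹ := by
  refine le_of_forall_Ico_le (f := fun x => κ * (x - a)) haT (by fun_prop) fun x hx => ?_
  have := sub_le_sub_of_hasDerivAt_le (fun x hx => h.hasDerivAt_inv hx)
    (fun x _ => hasDerivAt_mul_const (-κ)) hW hx
  simp only [Pi.inv_apply] at this
  linarith [inv_pos.2 (h.pos x hx)]

theorem neg_one_sub_le_mul (h : RiccatiSystem δ a T M N M') (hδ : 0 ≤ δ) (haT : a < T)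
    {κ : ℝ} (hκ : 0 < κ) (hW : ∀ x ∈ Ico a T, M x / N x ≤ -κ) :
    -1 - δ * (T - a) / (2 * κ) ≤ (T - a) * M a := by
  have hN := h.pos a (left_mem_Ico.2 haT)
  have hs : 0 < T - a := sub_pos.2 haT
  have hdecay : κ * (T - a) * N a ≤ 1 := by
    have := mul_le_mul_of_nonneg_right (h.mul_sub_le_inv haT hW) hN.le
    rwa [inv_mul_cancel₀ hN.ne'] at this
  have hquad : 0 ≤ 1 + M a * (T - a) + δ / 2 * (T - a) ^ 2 * N a := by
    have := mul_nonneg (h.quadratic_nonneg haT) hN.le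
    field_simp at this
    linarith
  have key : (-(2 * κ) - δ * (T - a)) / (2 * κ) ≤ (T - a) * M a := by
    rw [div_le_iff₀ (by linarith)]
    nlinarith [mul_le_mul_of_nonneg_left hdecay (mul_nonneg hδ hs.le)]
  convert key using 1
  field_simp [hκ.ne']

end RiccatiSystem

theorem roots_pos_lt_and_vieta {δ n m T₁ T₂ : ℝ} (hδn : 0 < δ * n) (hm : m < -√(2 * δ * n))
    (hT₁ : T₁ = -((m + √(m ^ 2 - 2 * δ * n)) / (δ * n)))
    (hT₂ : T₂ = -((m - √(m ^ 2 - 2 * δ * n)) / (δ * n))) :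
    0 < T₁ ∧ T₁ < T₂ ∧ δ * n * (T₁ + T₂) = -(2 * m) ∧ δ * n * (T₁ * T₂) = 2 := by
  have hdisc : 2 * δ * n < m ^ 2 := by
    have := Real.sq_sqrt (by linarith : 0 ≤ 2 * δ * n)
    nlinarith [Real.sqrt_nonneg (2 * δ * n)]
  set s := √(m ^ 2 - 2 * δ * n)
  have hs2 : s ^ 2 = m ^ 2 - 2 * δ * n := Real.sq_sqrt (by linarith)
  have hs : 0 < s := Real.sqrt_pos.2 (by linarith)
  have hms : m + s < 0 := by nlinarith [Real.sqrt_nonneg (2 * δ * n)]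
  have e₁ : δ * n * T₁ = -(m + s) := by rw [hT₁, mul_neg, mul_div_cancel₀ _ hδn.ne']
  have e₂ : δ * n * T₂ = -(m - s) := by rw [hT₂, mul_neg, mul_div_cancel₀ _ hδn.ne']
  refine ⟨?_, ?_, by linear_combination e₁ + e₂, ?_⟩
  · nlinarith
  · nlinarith
  · refine mul_left_cancel₀ hδn.ne' ?_
    linear_combination (δ * n * T₂) * e₁ - (m + s) * e₂ - hs2

theorem sub_mul_le_of_div_le_of_inv_le {δ t T₁ T₂ m n : ℝ} (ht : t < T₁) (hT : T₁ < T₂)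
    (hn : 0 < n) (hm : m / n ≤ δ * (t - (T₁ + T₂) / 2))
    (hinv : n⁻¹ ≤ δ / 2 * ((t - T₁) * (t - T₂))) :
    (T₁ - t) * m ≤ -2 * (t - (T₁ + T₂) / 2) / (t - T₂) := by
  have hm' : m ≤ δ * (t - (T₁ + T₂) / 2) * n := (div_le_iff₀ hn).1 hm
  have hn' : 2 ≤ δ * ((T₁ - t) * (T₂ - t)) * n := by
    have := mul_le_mul_of_nonneg_right hinv hn.le
    rw [inv_mul_cancel₀ hn.ne'] at this
    linarith
  have hT₂t : 0 < T₂ - t := by linarith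
  rw [← neg_div_neg_eq, le_div_iff₀ (by linarith)]
  nlinarith [mul_le_mul_of_nonneg_left hm' (mul_pos (sub_pos.2 ht) hT₂t).le]

theorem tendsto_neg_two_mul_sub_midpoint_div {T₁ T₂ : ℝ} (h : T₁ ≠ T₂) :
    Tendsto (fun t => -2 * (t - (T₁ + T₂) / 2) / (t - T₂)) (𝓝 T₁) (𝓝 (-1)) := by
  have hne : T₁ - T₂ ≠ 0 := sub_ne_zero.2 h
  have hcont : ContinuousAt (fun t => -2 * (t - (T₁ + T₂) / 2) / (t - T₂)) T₁ :=
    ContinuousAt.div (by fun_prop) (by fun_prop) hne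
  convert hcont.tendsto using 2
  field_simp
  ring

/-- Blow-up rate estimate: if `N > 0`, `M' ≤ -M² + δN`, `N' = -MN` on `[0,T₁)`
with `M(0) < -√(2δN(0))`, where `T₁ < T₂` are the two roots
`T₁ = -(M(0) + √(M(0)² - 2δN(0)))/(δN(0))`,
`T₂ = -(M(0) - √(M(0)² - 2δN(0)))/(δN(0))`, then for `t ∈ [0,T₁)` one has
`(T₁ - t) M(t) ≤ -2 (t - (T₁+T₂)/2)/(t - T₂)`, and consequently
`liminf_{t→T₁⁻} (T₁ - t) M(t) ≤ -1`. -/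
theorem riccati_blow_up_rate (δ T₁ T₂ : ℝ) (hδ : 0 < δ)
    (M N M' : ℝ → ℝ) (hN0 : 0 < N 0)
    (hNpos : ∀ t ∈ Ico (0:ℝ) T₁, 0 < N t)
    (hM : ∀ t ∈ Ico (0:ℝ) T₁, HasDerivAt M (M' t) t)
    (hM' : ∀ t ∈ Ico (0:ℝ) T₁, M' t ≤ -(M t) ^ 2 + δ * N t)
    (hN : ∀ t ∈ Ico (0:ℝ) T₁, HasDerivAt N (-(M t * N t)) t)
    (hM0 : M 0 < -Real.sqrt (2 * δ * N 0))
    (hT₁ : T₁ = -((M 0 + Real.sqrt ((M 0) ^ 2 - 2 * δ * N 0)) / (δ * N 0)))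
    (hT₂ : T₂ = -((M 0 - Real.sqrt ((M 0) ^ 2 - 2 * δ * N 0)) / (δ * N 0))) :
    (∀ t ∈ Ico (0:ℝ) T₁,
      (T₁ - t) * M t ≤ -2 * (t - (T₁ + T₂) / 2) / (t - T₂)) ∧
    liminf (fun t => (T₁ - t) * M t) (nhdsWithin T₁ (Iio T₁)) ≤ -1 := by
  obtain ⟨hT₁pos, hT₁₂, hsum, hprod⟩ := roots_pos_lt_and_vieta (mul_pos hδ hN0) hM0 hT₁ hT₂
  have h : RiccatiSystem δ 0 T₁ M N M' := ⟨hNpos, hM, hM', hN⟩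
  have hratio : ∀ t ∈ Ico 0 T₁, M t / N t ≤ δ * (t - (T₁ + T₂) / 2) := fun t ht => by
    have hW₀ : M 0 / N 0 = -(δ * (T₁ + T₂) / 2) := by
      rw [div_eq_iff hN0.ne']
      linear_combination hsum / 2
    linarith [h.div_sub_div_le ht]
  have hinv : ∀ t ∈ Ico 0 T₁, (N t)⁻¹ ≤ δ / 2 * ((t - T₁) * (t - T₂)) := fun t ht => by
    have hq : (N 0)⁻¹ + M 0 / N 0 * t + δ / 2 * t ^ 2 = δ / 2 * ((t - T₁) * (t - T₂)) := by
      field_simp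
      linear_combination t * hsum - hprod
    simpa [hq] using h.inv_le_quadratic ht
  have hupper : ∀ t ∈ Ico 0 T₁, (T₁ - t) * M t ≤ -2 * (t - (T₁ + T₂) / 2) / (t - T₂) :=
    fun t ht => sub_mul_le_of_div_le_of_inv_le ht.2 hT₁₂ (hNpos t ht) (hratio t ht) (hinv t ht)
  set κ := δ * (T₂ - T₁) / 2 with hκ_def
  have hκ : 0 < κ := by have := sub_pos.2 hT₁₂; positivity
  have hlower : ∀ t ∈ Ico 0 T₁, -1 - δ * T₁ / (2 * κ) ≤ (T₁ - t) * M t := fun t ht => by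
    refine le_trans ?_ ((h.mono ht.1).neg_one_sub_le_mul hδ.le ht.2 hκ fun x hx => ?_)
    · gcongr
      linarith [ht.1]
    · nlinarith [hratio x ⟨ht.1.trans hx.1, hx.2⟩, mul_le_mul_of_nonneg_left hx.2.le hδ.le]
  refine ⟨hupper, liminf_le_of_eventually_le_of_tendsto ?_ ?_
    ((tendsto_neg_two_mul_sub_midpoint_div hT₁₂.ne).mono_left nhdsWithin_le_nhds)⟩
  · exact ⟨_, eventually_map.2 (eventually_of_mem (Ico_mem_nhdsLT hT₁pos) hlower)⟩
  · exact eventually_of_mem (Ico_mem_nhdsLT hT₁pos) hupper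
end
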